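/- arXiv:2007.11086 — 4 statements merged into one kernel-verified Lean document; each statement's English description precedes it below -/
import Mathlib

section
/- Let K ⊆ ℝⁿ be compact, f : ℝⁿ → ℝⁿ Lipschitz with constant L on a neighborhood of K, 0 < δ' < δ, and τ > 0. Then there exists r > 0 (depending only on K, τ, δ', δ) such that: whenever x : [0,T] → ℝⁿ is a solution of x'(s) ∈ B_{δ'}(f(x(s))) with x(s) ∈ K for all s ∈ [0,T] and T ≥ τ, then for any y₀ ∈ B_r(x(0)) and y₁ ∈ B_r(x(T)), the function y(s) = x(s) + (s/T)(y₁ − x(T) + x(0) − y₀) + (y₀ − x(0)) is a solution of y'(s) ∈ B_δ(f(y(s))) on [0,T] with y(0) = y₀ and y(T) = y₁. -/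
open Metric Set Filter Topology

/-!
The correction `y s - x s = (s/T) • c + (y₀ - x 0)`, with `c = y₁ - x T + (x 0 - y₀)`, has norm at
most `3r` on `[0, T]` and constant derivative `T⁻¹ • c` of norm at most `2r/τ`. Hence `y'` differs
from `f (y s)` by at most `δ' + 2r/τ + 3Lr`, the Lipschitz term being available as soon as `3r` is
below the width of a thickening of `K` inside `V`, which exists by compactness. Taking `r` small
makes this at most `δ`.
-/

theorem norm_sub_add_sub_le_two_mul {E : Type*} [SeminormedAddCommGroup E] {a b c d : E} {r : ℝ}
    (hab : ‖b - a‖ ≤ r) (hcd : ‖d - c‖ ≤ r) : ‖d - c + (a - b)‖ ≤ 2 * r := by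
  rw [two_mul]
  exact (norm_add_le _ _).trans (add_le_add hcd (by rwa [norm_sub_rev]))

section SteerPath

variable {E : Type*} [NormedAddCommGroup E] [NormedSpace ℝ E]

noncomputable def steerPath (x : ℝ → E) (T : ℝ) (y₀ y₁ : E) (s : ℝ) : E :=
  x s + (s / T) • (y₁ - x T + (x 0 - y₀)) + (y₀ - x 0)

variable {x : ℝ → E} {T : ℝ} {y₀ y₁ : E}

@[simp]
theorem steerPath_zero : steerPath x T y₀ y₁ 0 = y₀ := by
  simp [steerPath]

theorem steerPath_self (hT : T ≠ 0) : steerPath x T y₀ y₁ T = y₁ := by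
  simp only [steerPath, div_self hT, one_smul]
  abel

theorem HasDerivAt.steerPath {v : E} {s : ℝ} (hx : HasDerivAt x v s) :
    HasDerivAt (steerPath x T y₀ y₁) (v + T⁻¹ • (y₁ - x T + (x 0 - y₀))) s := by
  have hs : HasDerivAt (fun s : ℝ => s / T) T⁻¹ s := by
    simpa using (hasDerivAt_id s).div_const T
  exact (hx.add (hs.smul_const _)).add_const _

theorem norm_steerPath_sub_le {r s : ℝ} (hs : s ∈ Icc 0 T)
    (h₀ : ‖y₀ - x 0‖ ≤ r) (h₁ : ‖y₁ - x T‖ ≤ r) :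
    ‖steerPath x T y₀ y₁ s - x s‖ ≤ 3 * r := by
  have hc := norm_sub_add_sub_le_two_mul h₀ h₁
  have hsT₀ : 0 ≤ s / T := div_nonneg hs.1 (hs.1.trans hs.2)
  have hsT₁ : s / T ≤ 1 := div_le_one_of_le₀ hs.2 (hs.1.trans hs.2)
  calc ‖steerPath x T y₀ y₁ s - x s‖
      = ‖(s / T) • (y₁ - x T + (x 0 - y₀)) + (y₀ - x 0)‖ := by
        rw [steerPath]; abel_nf
    _ ≤ ‖(s / T) • (y₁ - x T + (x 0 - y₀))‖ + ‖y₀ - x 0‖ := norm_add_le _ _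
    _ ≤ s / T * (2 * r) + r := by
        rw [norm_smul, Real.norm_of_nonneg hsT₀]
        gcongr
    _ ≤ 3 * r := by nlinarith [(norm_nonneg _).trans h₀]

end SteerPath

theorem LipschitzOnWith.norm_add_sub_le {E F : Type*} [SeminormedAddCommGroup E]
    [SeminormedAddCommGroup F] {f : E → F} {L : NNReal} {V : Set E}
    (hf : LipschitzOnWith L f V) {a b : E} (ha : a ∈ V) (hb : b ∈ V) (v w : F) :
    ‖v + w - f b‖ ≤ ‖v - f a‖ + ‖w‖ + L * ‖b - a‖ :=
  calc ‖v + w - f b‖ = ‖(v - f a) + w + (f a - f b)‖ := by congr 1; abel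
    _ ≤ ‖v - f a‖ + ‖w‖ + ‖f a - f b‖ := norm_add₃_le
    _ ≤ ‖v - f a‖ + ‖w‖ + L * ‖b - a‖ := by
        gcongr
        rw [norm_sub_rev b]
        exact hf.norm_sub_le ha hb

theorem steering_lemma_general {n : ℕ}
    (f : EuclideanSpace ℝ (Fin n) → EuclideanSpace ℝ (Fin n))
    (K : Set (EuclideanSpace ℝ (Fin n))) (hK : IsCompact K)
    (L : NNReal) (V : Set (EuclideanSpace ℝ (Fin n)))
    (hV : IsOpen V) (hKV : K ⊆ V) (hf : LipschitzOnWith L f V)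
    (δ' δ τ : ℝ) (hδ : δ' < δ) (hτ : 0 < τ) :
    ∃ r > 0, ∀ (T : ℝ), τ ≤ T →
      ∀ x : ℝ → EuclideanSpace ℝ (Fin n),
        (∀ s ∈ Icc (0 : ℝ) T, ∃ v, HasDerivAt x v s ∧ ‖v - f (x s)‖ ≤ δ') →
        (∀ s ∈ Icc (0 : ℝ) T, x s ∈ K) →
        ∀ y₀ ∈ closedBall (x 0) r, ∀ y₁ ∈ closedBall (x T) r,
          (fun s : ℝ => x s + (s / T) • (y₁ - x T + (x 0 - y₀)) + (y₀ - x 0)) 0 = y₀ ∧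
          (fun s : ℝ => x s + (s / T) • (y₁ - x T + (x 0 - y₀)) + (y₀ - x 0)) T = y₁ ∧
          (∀ s ∈ Icc (0 : ℝ) T, ∃ v,
            HasDerivAt (fun s : ℝ => x s + (s / T) • (y₁ - x T + (x 0 - y₀)) + (y₀ - x 0)) v s ∧
            ‖v - f (x s + (s / T) • (y₁ - x T + (x 0 - y₀)) + (y₀ - x 0))‖ ≤ δ) := by
  obtain ⟨r₀, hr₀, hthick⟩ := hK.exists_thickening_subset_open hV hKV
  -- Both sides are continuous in `r`, and the inequalities are strict at `r = 0`.
  have hsmall : ∀ᶠ r in 𝓝 (0 : ℝ), 3 * r < r₀ ∧ 2 * r / τ + L * (3 * r) < δ - δ' := by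
    refine (Continuous.tendsto ?_ 0).eventually_lt_const ?_ |>.and
      ((Continuous.tendsto ?_ 0).eventually_lt_const ?_) <;> first | fun_prop | simp [*]
  obtain ⟨r, ⟨hr₀, hrδ⟩, hr⟩ := ((hsmall.filter_mono (nhdsWithin_le_nhds (s := Ioi 0))).and
    self_mem_nhdsWithin).exists
  refine ⟨r, hr, fun T hτT x hx hxK y₀ hy₀ y₁ hy₁ => ?_⟩
  have hT : 0 < T := hτ.trans_le hτT
  rw [mem_closedBall, dist_eq_norm] at hy₀ hy₁
  refine ⟨steerPath_zero, steerPath_self hT.ne', fun s hs => ?_⟩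
  obtain ⟨v, hv, hvf⟩ := hx s hs
  have hclose := norm_steerPath_sub_le hs hy₀ hy₁
  have hyV : steerPath x T y₀ y₁ s ∈ V :=
    hthick (mem_thickening_iff.2 ⟨x s, hxK s hs, by rw [dist_eq_norm]; linarith⟩)
  have hslope : ‖T⁻¹ • (y₁ - x T + (x 0 - y₀))‖ ≤ 2 * r / τ := by
    rw [norm_smul, Real.norm_of_nonneg (inv_nonneg.2 hT.le), div_eq_inv_mul]
    gcongr
    exact norm_sub_add_sub_le_two_mul hy₀ hy₁
  refine ⟨_, hv.steerPath, ?_⟩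
  calc _ ≤ ‖v - f (x s)‖ + ‖T⁻¹ • (y₁ - x T + (x 0 - y₀))‖
          + L * ‖steerPath x T y₀ y₁ s - x s‖ :=
        hf.norm_add_sub_le (hKV (hxK s hs)) hyV _ _
    _ ≤ δ' + 2 * r / τ + L * (3 * r) := by gcongr
    _ ≤ δ := by linarith

/-- Steering lemma: for a compact `K`, `f` Lipschitz on a neighborhood of `K`,
`0 < δ' < δ` and `τ > 0`, there is `r > 0` such that any `δ'`-solution staying in
`K` on `[0,T]` (`T ≥ τ`) can be corrected by linear interpolation into a
`δ`-solution steering any `y₀ ∈ B_r(x(0))` to any `y₁ ∈ B_r(x(T))`. -/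
theorem steering_lemma {n : ℕ}
    (f : EuclideanSpace ℝ (Fin n) → EuclideanSpace ℝ (Fin n))
    (K : Set (EuclideanSpace ℝ (Fin n))) (hK : IsCompact K)
    (L : NNReal) (V : Set (EuclideanSpace ℝ (Fin n)))
    (hV : IsOpen V) (hKV : K ⊆ V) (hf : LipschitzOnWith L f V)
    (δ' δ τ : ℝ) (hδ' : 0 < δ') (hδ : δ' < δ) (hτ : 0 < τ) :
    ∃ r > 0, ∀ (T : ℝ), τ ≤ T →
      ∀ x : ℝ → EuclideanSpace ℝ (Fin n),
        (∀ s ∈ Icc (0 : ℝ) T, ∃ v, HasDerivAt x v s ∧ ‖v - f (x s)‖ ≤ δ') →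
        (∀ s ∈ Icc (0 : ℝ) T, x s ∈ K) →
        ∀ y₀ ∈ closedBall (x 0) r, ∀ y₁ ∈ closedBall (x T) r,
          (fun s : ℝ => x s + (s / T) • (y₁ - x T + (x 0 - y₀)) + (y₀ - x 0)) 0 = y₀ ∧
          (fun s : ℝ => x s + (s / T) • (y₁ - x T + (x 0 - y₀)) + (y₀ - x 0)) T = y₁ ∧
          (∀ s ∈ Icc (0 : ℝ) T, ∃ v,
            HasDerivAt (fun s : ℝ => x s + (s / T) • (y₁ - x T + (x 0 - y₀)) + (y₀ - x 0)) v s ∧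
            ‖v - f (x s + (s / T) • (y₁ - x T + (x 0 - y₀)) + (y₀ - x 0))‖ ≤ δ) :=
  steering_lemma_general f K hK L V hV hKV hf δ' δ τ hδ hτ
end

section
/- (Discrete-time steering lemma) Let K ⊆ ℝⁿ be compact, f Lipschitz with constant L on a neighborhood of K, and 0 < δ' < δ. Choose r > 0 with r + δ' + Lr < δ and B_r(K) contained in the Lipschitz neighborhood. If x(0),…,x(T) ∈ K (T ≥ 1) satisfies ‖x(s+1) − f(x(s))‖ ≤ δ' for all s < T, then for any y₀ ∈ B_r(x(0)) and y₁ ∈ B_r(x(T)), the sequence y(s) = x(s) + (s/T)(y₁ − x(T) + x(0) − y₀) + (y₀ − x(0)) satisfies y(0) = y₀, y(T) = y₁, and ‖y(s+1) − f(y(s))‖ < δ for all s < T; hence y₁ is reachable from y₀ in T steps by the δ-perturbed system. -/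
open Metric Set

/-- Discrete-time steering lemma: with `r + δ' + Lr < δ` and `f` `L`-Lipschitz on a
neighborhood containing `B_r(K)`, a `δ'`-trajectory in `K` of length `T ≥ 1` can be
corrected into a `δ`-trajectory joining any `y₀ ∈ B_r(x(0))` to any `y₁ ∈ B_r(x(T))`. -/
theorem discrete_steering_lemma {n : ℕ}
    (f : EuclideanSpace ℝ (Fin n) → EuclideanSpace ℝ (Fin n))
    (K : Set (EuclideanSpace ℝ (Fin n))) (hK : IsCompact K)
    (L : NNReal) (r δ' δ : ℝ) (hδ' : 0 < δ') (hδ : δ' < δ) (hr : 0 < r)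
    (hrsmall : r + δ' + (L : ℝ) * r < δ)
    (V : Set (EuclideanSpace ℝ (Fin n))) (hV : IsOpen V) (hKV : cthickening r K ⊆ V)
    (hf : LipschitzOnWith L f V)
    (x : ℕ → EuclideanSpace ℝ (Fin n)) (T : ℕ) (hT : 1 ≤ T)
    (hxK : ∀ s : ℕ, s ≤ T → x s ∈ K)
    (hx : ∀ s : ℕ, s < T → ‖x (s + 1) - f (x s)‖ ≤ δ')
    (y₀ y₁ : EuclideanSpace ℝ (Fin n))
    (hy₀ : y₀ ∈ closedBall (x 0) r) (hy₁ : y₁ ∈ closedBall (x T) r) :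
    (fun s : ℕ => x s + ((s : ℝ) / (T : ℝ)) • (y₁ - x T + (x 0 - y₀)) + (y₀ - x 0)) 0 = y₀ ∧
    (fun s : ℕ => x s + ((s : ℝ) / (T : ℝ)) • (y₁ - x T + (x 0 - y₀)) + (y₀ - x 0)) T = y₁ ∧
    ∀ s : ℕ, s < T →
      ‖(fun s : ℕ => x s + ((s : ℝ) / (T : ℝ)) • (y₁ - x T + (x 0 - y₀)) + (y₀ - x 0)) (s + 1)
        - f ((fun s : ℕ => x s + ((s : ℝ) / (T : ℝ)) • (y₁ - x T + (x 0 - y₀)) + (y₀ - x 0)) s)‖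
        < δ := by
  have hT0 : (0:ℝ) < (T:ℝ) := by exact_mod_cast Nat.lt_of_lt_of_le Nat.zero_lt_one hT
  have ha : ‖y₁ - x T‖ ≤ r := by
    rw [Metric.mem_closedBall, dist_eq_norm] at hy₁; exact hy₁
  have hb : ‖y₀ - x 0‖ ≤ r := by
    rw [Metric.mem_closedBall, dist_eq_norm] at hy₀; exact hy₀
  -- key bound on the correction term
  have key : ∀ t : ℝ, 0 ≤ t → t ≤ 1 →
      ‖t • (y₁ - x T + (x 0 - y₀)) + (y₀ - x 0)‖ ≤ r := by
    intro t ht0 ht1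
    have heq : t • (y₁ - x T + (x 0 - y₀)) + (y₀ - x 0)
        = t • (y₁ - x T) + (1 - t) • (y₀ - x 0) := by module
    rw [heq]
    calc ‖t • (y₁ - x T) + (1 - t) • (y₀ - x 0)‖
        ≤ ‖t • (y₁ - x T)‖ + ‖(1 - t) • (y₀ - x 0)‖ := norm_add_le _ _
      _ = t * ‖y₁ - x T‖ + (1 - t) * ‖y₀ - x 0‖ := by
          rw [norm_smul, norm_smul, Real.norm_eq_abs, Real.norm_eq_abs,
            abs_of_nonneg ht0, abs_of_nonneg (by linarith)]
      _ ≤ t * r + (1 - t) * r := by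
          gcongr <;> linarith
      _ = r := by ring
  have keyN : ∀ s : ℕ, s ≤ T → ‖((s:ℝ)/(T:ℝ)) • (y₁ - x T + (x 0 - y₀)) + (y₀ - x 0)‖ ≤ r := by
    intro s hs
    exact key _ (div_nonneg (Nat.cast_nonneg s) hT0.le)
      ((div_le_one hT0).mpr (by exact_mod_cast hs))
  have hmem : ∀ s : ℕ, s ≤ T →
      (x s + ((s:ℝ)/(T:ℝ)) • (y₁ - x T + (x 0 - y₀)) + (y₀ - x 0)) ∈ V := by
    intro s hs
    apply hKV
    apply mem_cthickening_of_dist_le _ (x s) r K (hxK s hs)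
    rw [dist_eq_norm]
    have : x s + ((s:ℝ)/(T:ℝ)) • (y₁ - x T + (x 0 - y₀)) + (y₀ - x 0) - x s
        = ((s:ℝ)/(T:ℝ)) • (y₁ - x T + (x 0 - y₀)) + (y₀ - x 0) := by abel
    rw [this]
    exact keyN s hs
  have hxV : ∀ s : ℕ, s ≤ T → x s ∈ V := by
    intro s hs
    apply hKV
    apply mem_cthickening_of_dist_le _ (x s) r K (hxK s hs)
    simp [hr.le]
  refine ⟨by simp, ?_, ?_⟩
  · simp only
    have : ((T:ℝ)/(T:ℝ)) = 1 := div_self hT0.ne'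
    rw [this, one_smul]
    abel
  · intro s hs
    simp only
    set ys := x s + ((s:ℝ)/(T:ℝ)) • (y₁ - x T + (x 0 - y₀)) + (y₀ - x 0) with hys
    have heq : x (s+1) + (((s:ℕ)+1:ℝ)/(T:ℝ)) • (y₁ - x T + (x 0 - y₀)) + (y₀ - x 0) - f ys
        = (x (s+1) - f (x s)) + ((((s:ℕ)+1:ℝ)/(T:ℝ)) • (y₁ - x T + (x 0 - y₀)) + (y₀ - x 0))
          + (f (x s) - f ys) := by abel
    have hcast : ((s+1 : ℕ) : ℝ) = ((s:ℕ):ℝ) + 1 := by push_cast; ring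
    rw [hcast, heq]
    have h1 : ‖x (s+1) - f (x s)‖ ≤ δ' := hx s hs
    have h2 : ‖(((s:ℕ)+1:ℝ)/(T:ℝ)) • (y₁ - x T + (x 0 - y₀)) + (y₀ - x 0)‖ ≤ r := by
      have := keyN (s+1) hs
      rwa [hcast] at this
    have h3 : ‖f (x s) - f ys‖ ≤ (L:ℝ) * r := by
      have hdist := hf.dist_le_mul (x s) (hxV s hs.le) ys (hmem s hs.le)
      rw [dist_eq_norm] at hdist
      refine hdist.trans ?_
      have : dist (x s) ys ≤ r := by
        rw [dist_eq_norm]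
        have : x s - ys = -(((s:ℝ)/(T:ℝ)) • (y₁ - x T + (x 0 - y₀)) + (y₀ - x 0)) := by
          rw [hys]; abel
        rw [this, norm_neg]
        exact keyN s hs.le
      exact mul_le_mul_of_nonneg_left this L.coe_nonneg
    calc ‖_ + _ + _‖ ≤ ‖x (s+1) - f (x s)‖
          + ‖(((s:ℕ)+1:ℝ)/(T:ℝ)) • (y₁ - x T + (x 0 - y₀)) + (y₀ - x 0)‖
          + ‖f (x s) - f ys‖ := norm_add₃_le
      _ ≤ δ' + r + (L:ℝ)*r := by gcongr
      _ < δ := by linarith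
end

section
/- (Robust stability of the reachable-set closure, discrete time, uniform boundedness part) Assume: W is δ-robustly safe w.r.t. U for x(t+1) = f(x(t)) + d(t); Ω := closure(R_δ(W)) is compact and disjoint from closure(U); f is locally Lipschitz; and 0 ≤ δ' < δ. Then for every ε > 0 there exists δ_ε > 0 such that every trajectory x of the δ'-perturbed discrete system with dist(x(0), Ω) < δ_ε satisfies dist(x(t), Ω) < ε for all t ∈ ℕ. -/
open Metric Set

/-- The set of states reachable in finitely many steps from `W` under the δ-perturbed
discrete system `x(t+1) = f(x(t)) + d(t)`, `‖d(t)‖ ≤ δ`. -/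
def DReach {n : ℕ} (f : EuclideanSpace ℝ (Fin n) → EuclideanSpace ℝ (Fin n))
    (δ : ℝ) (W : Set (EuclideanSpace ℝ (Fin n))) : Set (EuclideanSpace ℝ (Fin n)) :=
  {y | ∃ (x d : ℕ → EuclideanSpace ℝ (Fin n)),
    (∀ t : ℕ, ‖d t‖ ≤ δ) ∧ (∀ t : ℕ, x (t + 1) = f (x t) + d t) ∧
    x 0 ∈ W ∧ ∃ t : ℕ, x t = y}

lemma dreach_step {n : ℕ} {f : EuclideanSpace ℝ (Fin n) → EuclideanSpace ℝ (Fin n)}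
    {δ : ℝ} (hδ : 0 ≤ δ) {W : Set (EuclideanSpace ℝ (Fin n))}
    {y e : EuclideanSpace ℝ (Fin n)} (hy : y ∈ DReach f δ W) (he : ‖e‖ ≤ δ) :
    f y + e ∈ DReach f δ W := by
  obtain ⟨x, d, hd, hx, h0, t₀, ht⟩ := hy
  set d' : ℕ → EuclideanSpace ℝ (Fin n) :=
    fun s => if s < t₀ then d s else if s = t₀ then e else 0 with hd'
  let x' : ℕ → EuclideanSpace ℝ (Fin n) :=
    fun s => Nat.rec (x 0) (fun s xs => f xs + d' s) s
  have hstep : ∀ s, x' (s + 1) = f (x' s) + d' s := fun s => rfl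
  have hagree : ∀ s, s ≤ t₀ → x' s = x s := by
    intro s hs
    induction s with
    | zero => rfl
    | succ k ih =>
      have hk : k < t₀ := hs
      rw [hstep, ih (le_of_lt hk), hx k]
      simp [hd', hk]
  refine ⟨x', d', ?_, hstep, h0, t₀ + 1, ?_⟩
  · intro s
    by_cases h1 : s < t₀
    · simpa [hd', h1] using hd s
    · by_cases h2 : s = t₀
      · simpa [hd', h1, h2] using he
      · simpa [hd', h1, h2] using hδ
  · rw [hstep, hagree t₀ le_rfl, ht]
    simp [hd']

/-- Discrete-time uniform boundedness: if `W` is δ-robustly safe w.r.t. `U`,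
`Ω = closure(R_δ(W))` is compact and disjoint from `closure U`, `f` is locally
Lipschitz, and `0 ≤ δ' < δ`, then for every `ε > 0` there is `δ_ε > 0` such that
δ'-trajectories starting within `δ_ε` of `Ω` stay within `ε` of `Ω`. -/
theorem discrete_reachable_closure_stable {n : ℕ}
    (f : EuclideanSpace ℝ (Fin n) → EuclideanSpace ℝ (Fin n))
    (hf : LocallyLipschitz f) (δ δ' : ℝ) (hδ' : 0 ≤ δ') (hδ : δ' < δ)
    (W U : Set (EuclideanSpace ℝ (Fin n)))
    (hsafe : ∀ (x d : ℕ → EuclideanSpace ℝ (Fin n)),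
      (∀ t : ℕ, ‖d t‖ ≤ δ) → (∀ t : ℕ, x (t + 1) = f (x t) + d t) →
      x 0 ∈ W → ∀ t : ℕ, x t ∉ U)
    (hΩc : IsCompact (closure (DReach f δ W)))
    (hΩU : Disjoint (closure (DReach f δ W)) (closure U)) :
    ∀ ε > (0 : ℝ), ∃ δε > (0 : ℝ), ∀ (x d : ℕ → EuclideanSpace ℝ (Fin n)),
      (∀ t : ℕ, ‖d t‖ ≤ δ') → (∀ t : ℕ, x (t + 1) = f (x t) + d t) →
      infDist (x 0) (closure (DReach f δ W)) < δε →
      ∀ t : ℕ, infDist (x t) (closure (DReach f δ W)) < ε := by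
  intro ε hε
  set R := DReach f δ W with hR
  set Ω := closure R with hΩ
  by_cases hne : R.Nonempty
  · -- uniform continuity of f on a compact thickening of Ω
    have hK : IsCompact (cthickening 1 Ω) := hΩc.cthickening
    have hUC : UniformContinuousOn f (cthickening 1 Ω) :=
      hK.uniformContinuousOn_of_continuous (hf.continuous.continuousOn)
    rw [Metric.uniformContinuousOn_iff] at hUC
    obtain ⟨r0, hr0, hr0'⟩ := hUC (δ - δ') (by linarith)
    set r : ℝ := min r0 1 with hrdef
    have hr : 0 < r := lt_min hr0 one_pos
    -- key invariance: points within r of Ω get mapped into Ω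
    have key : ∀ p : EuclideanSpace ℝ (Fin n), infDist p Ω < r →
        ∀ e : EuclideanSpace ℝ (Fin n), ‖e‖ ≤ δ' → f p + e ∈ Ω := by
      intro p hp e he
      have hpR : infDist p R < r := by rwa [hΩ, infDist_closure] at hp
      obtain ⟨y, hyR, hpy⟩ := (infDist_lt_iff hne).mp hpR
      have hyΩ : y ∈ Ω := subset_closure hyR
      have hyK : y ∈ cthickening 1 Ω := self_subset_cthickening _ hyΩ
      have hpK : p ∈ cthickening 1 Ω :=
        mem_cthickening_of_dist_le p y 1 Ω hyΩ
          (le_trans hpy.le (min_le_right r0 1))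
      have hdist : dist p y < r0 := lt_of_lt_of_le hpy (min_le_left r0 1)
      have hfd : dist (f p) (f y) < δ - δ' := hr0' p hpK y hyK hdist
      have heq : f p + e = f y + (f p - f y + e) := by abel
      have hnorm : ‖f p - f y + e‖ ≤ δ := by
        calc ‖f p - f y + e‖ ≤ ‖f p - f y‖ + ‖e‖ := norm_add_le _ _
          _ ≤ dist (f p) (f y) + δ' := by rw [dist_eq_norm]; linarith
          _ ≤ δ := by linarith
      rw [heq]
      exact subset_closure (dreach_step (by linarith) hyR hnorm)
    refine ⟨min ε r, lt_min hε hr, ?_⟩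
    intro x d hd hx h0 t
    have main : ∀ t, infDist (x t) Ω < min ε r := by
      intro t
      induction t with
      | zero => exact h0
      | succ k ih =>
        have hk : infDist (x k) Ω < r := lt_of_lt_of_le ih (min_le_right ε r)
        have : x (k + 1) ∈ Ω := by rw [hx k]; exact key _ hk _ (hd k)
        rw [infDist_zero_of_mem this]
        exact lt_min hε hr
    exact lt_of_lt_of_le (main t) (min_le_left ε r)
  · refine ⟨ε, hε, ?_⟩
    intro x d hd hx h0 t
    have : Ω = ∅ := by
      rw [hΩ, Set.not_nonempty_iff_eq_empty.mp hne, closure_empty]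
    rw [this, infDist_empty]
    exact hε
end

section
/- (Barrier from discrete-time Lyapunov function) Let A ⊆ D ⊆ ℝⁿ with A closed, D open, and V : D → ℝ satisfy α₁(dist(x,A)) ≤ V(x) ≤ α₂(dist(x,A)) for x ∈ D, and V(f(x)+d) − V(x) ≤ −α₃(dist(x,A)) for all x ∈ D with f(x)+d ∈ D and ‖d‖ ≤ δ, where α₁,α₂,α₃ are class-K. Then B := −V satisfies: B ≥ 0 on A, B < 0 on D \ A, and B(f(x)+d) − B(x) ≥ −α(B(x)) for all such x, d, where α(s) := −α₃(α₂⁻¹(−s)) is increasing on (−a, 0] with α(0) = 0; in particular B(f(x)+d) ≥ 0 whenever B(x) ≥ 0. -/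
/-!
On `A` the distance vanishes, so `α₂` squeezes `V` to `0`; off the closed set `A` it is positive,
so `α₁` makes `V` positive. Since `V x ≤ α₂ (dist(x, A))`, the intermediate value theorem writes
`V x = α₂ r` with `r ≤ dist(x, A)`, hence `α₂⁻¹ (V x) ≤ dist(x, A)` and the decrease condition
`V(f x + d) - V x ≤ -α₃ (dist(x, A)) ≤ -α₃ (α₂⁻¹ (V x))` is the barrier inequality for `B = -V`.
As `B ≤ 0` on `D`, `B x ≥ 0` forces `B x = 0`, where the rate `α` vanishes.
-/

open Metric Set

def IsClassK (α : ℝ → ℝ) : Prop :=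
  α 0 = 0 ∧ StrictMonoOn α (Ici (0 : ℝ)) ∧ ContinuousOn α (Ici (0 : ℝ))

namespace IsClassK

variable {α : ℝ → ℝ}

theorem monotoneOn (hα : IsClassK α) : MonotoneOn α (Ici 0) :=
  hα.2.1.monotoneOn

theorem nonneg (hα : IsClassK α) {s : ℝ} (hs : 0 ≤ s) : 0 ≤ α s :=
  hα.1 ▸ hα.monotoneOn self_mem_Ici hs hs

theorem pos (hα : IsClassK α) {s : ℝ} (hs : 0 < s) : 0 < α s :=
  hα.1 ▸ hα.2.1 self_mem_Ici hs.le hs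

theorem Icc_subset_image (hα : IsClassK α) {t : ℝ} (ht : 0 ≤ t) :
    Icc 0 (α t) ⊆ α '' Icc 0 t := by
  simpa only [hα.1] using intermediate_value_Icc ht (hα.2.2.mono Icc_subset_Ici_self)

variable {αinv : ℝ → ℝ}

theorem leftInv_mem_Icc (hα : IsClassK α) (hinv : ∀ s, 0 ≤ s → αinv (α s) = s) {t y : ℝ}
    (ht : 0 ≤ t) (hy : y ∈ Icc 0 (α t)) : αinv y ∈ Icc 0 t := by
  obtain ⟨r, hr, rfl⟩ := hα.Icc_subset_image ht hy
  rwa [hinv r hr.1]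

theorem leftInv_zero (hα : IsClassK α) (hinv : ∀ s, 0 ≤ s → αinv (α s) = s) : αinv 0 = 0 := by
  simpa only [hα.1] using hinv 0 le_rfl

theorem strictMonoOn_leftInv (hα : IsClassK α) (hinv : ∀ s, 0 ≤ s → αinv (α s) = s) :
    StrictMonoOn αinv (α '' Ici 0) := by
  rintro _ ⟨r, hr, rfl⟩ _ ⟨s, hs, rfl⟩ hlt
  rw [hinv r hr, hinv s hs]
  exact lt_of_not_ge fun hsr => hlt.not_ge (hα.monotoneOn hs hr hsr)

end IsClassK

theorem strictMonoOn_neg_comp_leftInv_neg {α₂ α₃ α₂inv : ℝ → ℝ} (hα₂ : IsClassK α₂)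
    (hα₃ : IsClassK α₃) (hinv : ∀ s, 0 ≤ s → α₂inv (α₂ s) = s) :
    StrictMonoOn (fun s : ℝ => -α₃ (α₂inv (-s))) (Ioc (-α₂ 1) 0) := by
  have hmem : ∀ s ∈ Ioc (-α₂ 1) 0, -s ∈ Icc 0 (α₂ 1) := fun s hs =>
    ⟨neg_nonneg.2 hs.2, by linarith [hs.1]⟩
  have himage : ∀ s ∈ Ioc (-α₂ 1) 0, -s ∈ α₂ '' Ici 0 := fun s hs =>
    image_mono Icc_subset_Ici_self (hα₂.Icc_subset_image zero_le_one (hmem s hs))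
  intro s hs t ht hst
  have hlt := hα₂.strictMonoOn_leftInv hinv (himage t ht) (himage s hs) (neg_lt_neg hst)
  exact neg_lt_neg <| hα₃.2.1 (hα₂.leftInv_mem_Icc hinv zero_le_one (hmem t ht)).1
    (hα₂.leftInv_mem_Icc hinv zero_le_one (hmem s hs)).1 hlt

theorem discrete_barrier_from_lyapunov_general {n : ℕ}
    (f : EuclideanSpace ℝ (Fin n) → EuclideanSpace ℝ (Fin n)) (δ : ℝ)
    (D : Set (EuclideanSpace ℝ (Fin n)))
    (A : Set (EuclideanSpace ℝ (Fin n))) (hA : IsClosed A) (hAD : A ⊆ D)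
    (hAne : A.Nonempty)
    (V : EuclideanSpace ℝ (Fin n) → ℝ)
    (α₁ α₂ α₃ : ℝ → ℝ) (hα₁ : IsClassK α₁) (hα₂ : IsClassK α₂) (hα₃ : IsClassK α₃)
    (α₂inv : ℝ → ℝ)
    (hinvL : ∀ s : ℝ, 0 ≤ s → α₂inv (α₂ s) = s)
    (hbound : ∀ x ∈ D, α₁ (infDist x A) ≤ V x ∧ V x ≤ α₂ (infDist x A))
    (hdecr : ∀ x ∈ D, ∀ d : EuclideanSpace ℝ (Fin n), ‖d‖ ≤ δ → f x + d ∈ D →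
      V (f x + d) - V x ≤ -α₃ (infDist x A)) :
    (∀ x ∈ A, 0 ≤ -V x) ∧
    (∀ x ∈ D \ A, -V x < 0) ∧
    (∀ x ∈ D, ∀ d : EuclideanSpace ℝ (Fin n), ‖d‖ ≤ δ → f x + d ∈ D →
      -((fun s : ℝ => -α₃ (α₂inv (-s))) (-V x)) ≤ (-V (f x + d)) - (-V x)) ∧
    (∃ a > (0 : ℝ), StrictMonoOn (fun s : ℝ => -α₃ (α₂inv (-s))) (Ioc (-a) 0) ∧
      (fun s : ℝ => -α₃ (α₂inv (-s))) 0 = 0) ∧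
    (∀ x ∈ D, ∀ d : EuclideanSpace ℝ (Fin n), ‖d‖ ≤ δ → f x + d ∈ D →
      0 ≤ -V x → 0 ≤ -V (f x + d)) := by
  have hV_nonneg : ∀ x ∈ D, 0 ≤ V x := fun x hx =>
    (hα₁.nonneg infDist_nonneg).trans (hbound x hx).1
  have hrate_zero : -α₃ (α₂inv (-0)) = 0 := by
    rw [neg_zero, hα₂.leftInv_zero hinvL, hα₃.1, neg_zero]
  have hbarrier : ∀ x ∈ D, ∀ d : EuclideanSpace ℝ (Fin n), ‖d‖ ≤ δ → f x + d ∈ D →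
      -(-α₃ (α₂inv (-(-V x)))) ≤ -V (f x + d) - -V x := by
    intro x hx d hd hfd
    rw [neg_neg, neg_neg]
    have hinv_le := hα₂.leftInv_mem_Icc hinvL infDist_nonneg ⟨hV_nonneg x hx, (hbound x hx).2⟩
    have := hα₃.monotoneOn hinv_le.1 (mem_Ici.2 infDist_nonneg) hinv_le.2
    linarith [hdecr x hx d hd hfd]
  refine ⟨fun x hx => ?_, fun x hx => ?_, hbarrier,
    ⟨α₂ 1, hα₂.pos one_pos, strictMonoOn_neg_comp_leftInv_neg hα₂ hα₃ hinvL, hrate_zero⟩,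
    fun x hx d hd hfd hBx => ?_⟩
  · have := (hbound x (hAD hx)).2
    rw [infDist_zero_of_mem hx, hα₂.1] at this
    linarith
  · have hpos := hα₁.pos ((hA.notMem_iff_infDist_pos hAne).1 hx.2)
    linarith [(hbound x hx.1).1]
  · have hVx : -V x = 0 := le_antisymm (neg_nonpos.2 (hV_nonneg x hx)) hBx
    have := hbarrier x hx d hd hfd
    rw [hVx, hrate_zero] at this
    linarith

/-- Barrier from a discrete-time Lyapunov function: `B := -V` is nonnegative on `A`,
negative on `D \ A`, and satisfies `B(f(x)+d) - B(x) ≥ -α(B(x))` with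
`α(s) := -α₃(α₂⁻¹(-s))` increasing on `(-a, 0]` with `α(0) = 0`; in particular
`B(f(x)+d) ≥ 0` whenever `B(x) ≥ 0`. -/
theorem discrete_barrier_from_lyapunov {n : ℕ}
    (f : EuclideanSpace ℝ (Fin n) → EuclideanSpace ℝ (Fin n)) (δ : ℝ) (hδ : 0 ≤ δ)
    (D : Set (EuclideanSpace ℝ (Fin n))) (hD : IsOpen D)
    (A : Set (EuclideanSpace ℝ (Fin n))) (hA : IsClosed A) (hAD : A ⊆ D)
    (hAne : A.Nonempty)
    (V : EuclideanSpace ℝ (Fin n) → ℝ)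
    (α₁ α₂ α₃ : ℝ → ℝ) (hα₁ : IsClassK α₁) (hα₂ : IsClassK α₂) (hα₃ : IsClassK α₃)
    (α₂inv : ℝ → ℝ)
    (hinvL : ∀ s : ℝ, 0 ≤ s → α₂inv (α₂ s) = s)
    (hinvR : ∀ t ∈ α₂ '' Ici (0 : ℝ), α₂ (α₂inv t) = t)
    (hbound : ∀ x ∈ D, α₁ (infDist x A) ≤ V x ∧ V x ≤ α₂ (infDist x A))
    (hdecr : ∀ x ∈ D, ∀ d : EuclideanSpace ℝ (Fin n), ‖d‖ ≤ δ → f x + d ∈ D →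
      V (f x + d) - V x ≤ -α₃ (infDist x A)) :
    (∀ x ∈ A, 0 ≤ -V x) ∧
    (∀ x ∈ D \ A, -V x < 0) ∧
    (∀ x ∈ D, ∀ d : EuclideanSpace ℝ (Fin n), ‖d‖ ≤ δ → f x + d ∈ D →
      -((fun s : ℝ => -α₃ (α₂inv (-s))) (-V x)) ≤ (-V (f x + d)) - (-V x)) ∧
    (∃ a > (0 : ℝ), StrictMonoOn (fun s : ℝ => -α₃ (α₂inv (-s))) (Ioc (-a) 0) ∧
      (fun s : ℝ => -α₃ (α₂inv (-s))) 0 = 0) ∧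
    (∀ x ∈ D, ∀ d : EuclideanSpace ℝ (Fin n), ‖d‖ ≤ δ → f x + d ∈ D →
      0 ≤ -V x → 0 ≤ -V (f x + d)) :=
  discrete_barrier_from_lyapunov_general f δ D A hA hAD hAne V α₁ α₂ α₃ hα₁ hα₂ hα₃ α₂inv hinvL
    hbound hdecr
end
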